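/- arXiv:2204.00595 — 3 statements merged into one kernel-verified Lean document; each statement's English description precedes it below -/
import Mathlib

section
/- Let m ≥ 2 be an integer, n = m², ω = exp(−2πi/n), and let F be the n×n discrete Fourier transform matrix over ℂ with F[j,k] = ω^{jk} (0-based indices). Then F · P_{(m,n)} is a Monarch matrix; that is, there exist L ∈ DB(m,n) and R ∈ BD(m,n) such that F = L · R · P_{(m,n)} (using that P_{(m,m²)} is a symmetric involution). -/
open Matrix

/-- `BD b n R`: `R` is block-diagonal with `n/b` diagonal blocks of size `b × b`. -/
def BD (b n : ℕ) (R : Matrix (Fin n) (Fin n) ℂ) : Prop :=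
  ∀ i j : Fin n, i.val / b ≠ j.val / b → R i j = 0

/-- `DB b n L`: `L[i,j] = 0` whenever `i ≢ j (mod b)`. -/
def DB (b n : ℕ) (L : Matrix (Fin n) (Fin n) ℂ) : Prop :=
  ∀ i j : Fin n, i.val % b ≠ j.val % b → L i j = 0

/-- The permutation matrix `P_{(b,n)}`. -/
def permMat (b n : ℕ) : Matrix (Fin n) (Fin n) ℂ :=
  Matrix.of fun i j => if i.val = j.val % b * (n / b) + j.val / b then 1 else 0

/-! Cooley–Tukey in one step. Writing `k = m k₁ + k₀`, the relation `ω ^ (m * m) = 1` gives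
`ω ^ (j k) = ω ^ (j k₀) · ω ^ (m (j mod m) k₁)`. After the columns are permuted by
`σ : k ↦ m k₀ + k₁`, the first factor depends only on the row and the new column's block,
the second only on the row's residue and the new column: such a matrix is a product `L R`
with `L ∈ DB(m, m²)` and `R ∈ BD(m, m²)`. -/

lemma divNat_finProdFinEquiv {m n : ℕ} (x : Fin m × Fin n) : (finProdFinEquiv x).divNat = x.1 :=
  congrArg Prod.fst (finProdFinEquiv.symm_apply_apply x)

lemma modNat_finProdFinEquiv {m n : ℕ} (x : Fin m × Fin n) : (finProdFinEquiv x).modNat = x.2 :=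
  congrArg Prod.snd (finProdFinEquiv.symm_apply_apply x)

def swapDigits (m : ℕ) : Equiv.Perm (Fin (m * m)) :=
  finProdFinEquiv.symm.trans ((Equiv.prodComm _ _).trans finProdFinEquiv)

section swapDigits

variable {m : ℕ}

lemma divNat_swapDigits (k : Fin (m * m)) : (swapDigits m k).divNat = k.modNat :=
  divNat_finProdFinEquiv _

lemma modNat_swapDigits (k : Fin (m * m)) : (swapDigits m k).modNat = k.divNat :=
  modNat_finProdFinEquiv _

lemma val_swapDigits (k : Fin (m * m)) : (swapDigits m k : ℕ) = k % m * m + k / m := by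
  simp only [swapDigits, Equiv.trans_apply, finProdFinEquiv_symm_apply, Equiv.prodComm_apply,
    Prod.swap_prod_mk, finProdFinEquiv_apply_val, Fin.coe_divNat, Fin.coe_modNat]
  ring

lemma permMat_apply (i k : Fin (m * m)) :
    permMat m (m * m) i k = if i = swapDigits m k then 1 else 0 := by
  have hm : 0 < m := Nat.pos_of_mul_pos_left k.pos
  simp only [permMat, of_apply, Nat.mul_div_cancel _ hm, Fin.ext_iff, val_swapDigits]

lemma mul_permMat_apply (A : Matrix (Fin (m * m)) (Fin (m * m)) ℂ) (j k : Fin (m * m)) :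
    (A * permMat m (m * m)) j k = A j (swapDigits m k) := by
  simp [mul_apply, permMat_apply]

end swapDigits

section Monarch

variable {m : ℕ}

def monarchLeft (f : Fin (m * m) → Fin m → ℂ) : Matrix (Fin (m * m)) (Fin (m * m)) ℂ :=
  of fun i s => if i.modNat = s.modNat then f i s.divNat else 0

def monarchRight (g : Fin m → Fin (m * m) → ℂ) : Matrix (Fin (m * m)) (Fin (m * m)) ℂ :=
  of fun s t => if s.divNat = t.divNat then g s.modNat t else 0

lemma DB_monarchLeft (f : Fin (m * m) → Fin m → ℂ) : DB m (m * m) (monarchLeft f) := by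
  intro i s h
  rw [monarchLeft, of_apply, if_neg (by simpa [Fin.ext_iff] using h)]

lemma BD_monarchRight (g : Fin m → Fin (m * m) → ℂ) : BD m (m * m) (monarchRight g) := by
  intro s t h
  rw [monarchRight, of_apply, if_neg (by simpa [Fin.ext_iff] using h)]

lemma monarchLeft_mul_monarchRight_apply (f : Fin (m * m) → Fin m → ℂ)
    (g : Fin m → Fin (m * m) → ℂ) (j t : Fin (m * m)) :
    (monarchLeft f * monarchRight g) j t = f j t.divNat * g j.modNat t := by
  rw [mul_apply, ← finProdFinEquiv.sum_comp, Fintype.sum_prod_type]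
  simp [monarchLeft, monarchRight, divNat_finProdFinEquiv, modNat_finProdFinEquiv]

end Monarch

lemma pow_mul_eq_of_pow_mul_self_eq_one {M : Type*} [Monoid M] {ω : M} {m : ℕ}
    (hω : ω ^ (m * m) = 1) (j k : ℕ) :
    ω ^ (j * k) = ω ^ (j * (k % m)) * ω ^ (m * (j % m) * (k / m)) := by
  have hexp : j * k = j * (k % m) + m * (j % m) * (k / m) + m * m * (j / m * (k / m)) := by
    have hj := Nat.div_add_mod j m
    have hk := Nat.mod_add_div k m
    set a := j / m
    set b := j % m
    set c := k / m
    set d := k % m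
    rw [← hj, ← hk]
    ring
  rw [hexp, pow_add, pow_mul, hω, one_pow, mul_one, pow_add]

lemma Complex.exp_neg_two_pi_I_div_pow_self (n : ℕ) :
    exp (-2 * Real.pi * I / n) ^ n = 1 := by
  rcases eq_or_ne n 0 with rfl | hn
  · exact pow_zero _
  rw [← exp_nat_mul, show (n : ℂ) * (-2 * Real.pi * I / n) = -(2 * Real.pi * I) by
    field_simp, exp_neg, exp_two_pi_mul_I, inv_one]

lemma dft_eq_monarchLeft_mul_monarchRight_mul_permMat {m : ℕ} {ω : ℂ} (hω : ω ^ (m * m) = 1) :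
    (of fun j k : Fin (m * m) => ω ^ (j.val * k.val)) =
      monarchLeft (fun j a => ω ^ (j.val * a.val)) *
        monarchRight (fun b t => ω ^ (m * b.val * t.modNat.val)) * permMat m (m * m) := by
  ext j k
  rw [mul_permMat_apply, monarchLeft_mul_monarchRight_apply, divNat_swapDigits,
    modNat_swapDigits, of_apply, pow_mul_eq_of_pow_mul_self_eq_one hω]
  simp only [Fin.coe_modNat, Fin.coe_divNat]

theorem dft_times_perm_is_monarch_general (m : ℕ)
    (F : Matrix (Fin (m * m)) (Fin (m * m)) ℂ)
    (hF : ∀ j k : Fin (m * m),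
      F j k = Complex.exp (-2 * (Real.pi : ℂ) * Complex.I / ((m : ℂ) * (m : ℂ)))
        ^ (j.val * k.val)) :
    ∃ L R : Matrix (Fin (m * m)) (Fin (m * m)) ℂ,
      DB m (m * m) L ∧ BD m (m * m) R ∧ F = L * R * permMat m (m * m) := by
  have hω : Complex.exp (-2 * (Real.pi : ℂ) * Complex.I / ((m : ℂ) * (m : ℂ))) ^ (m * m) = 1 := by
    exact_mod_cast Complex.exp_neg_two_pi_I_div_pow_self (m * m)
  exact ⟨_, _, DB_monarchLeft _, BD_monarchRight _,
    (Matrix.ext hF).trans (dft_eq_monarchLeft_mul_monarchRight_mul_permMat hω)⟩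

/-- for `n = m²` and the DFT matrix `F[j,k] = ω^{jk}` with
`ω = exp(−2πi/n)`, the matrix `F · P_{(m,n)}` is a Monarch matrix; equivalently
`F = L · R · P_{(m,n)}` for some `L ∈ DB(m,n)` and `R ∈ BD(m,n)`. -/
theorem dft_times_perm_is_monarch (m : ℕ) (hm : 2 ≤ m)
    (F : Matrix (Fin (m * m)) (Fin (m * m)) ℂ)
    (hF : ∀ j k : Fin (m * m),
      F j k = Complex.exp (-2 * (Real.pi : ℂ) * Complex.I / ((m : ℂ) * (m : ℂ)))
        ^ (j.val * k.val)) :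
    ∃ L R : Matrix (Fin (m * m)) (Fin (m * m)) ℂ,
      DB m (m * m) L ∧ BD m (m * m) R ∧ F = L * R * permMat m (m * m) :=
  dft_times_perm_is_monarch_general m F hF
end

section
/- Let n ≥ 4 be a power of 4 and let m = √n. Then every n×n circulant matrix C over ℂ (i.e., C[i,j] = c[(i − j) mod n] for some vector c ∈ ℂⁿ) belongs to the class MM*(m, n): there exist Monarch matrices M₁, M₂ ∈ M(m,n) with C = M₁ · M₂*. -/
open Matrix

/-- The Monarch class `M(b,n) = { L·R : L ∈ DB(b,n), R ∈ BD(b,n) }`. -/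
def MonarchClass (b n : ℕ) (M : Matrix (Fin n) (Fin n) ℂ) : Prop :=
  ∃ L R : Matrix (Fin n) (Fin n) ℂ, DB b n L ∧ BD b n R ∧ M = L * R

/-!
With `ω = exp (2πi / n)`, the characters `a ↦ ω ^ (t * a)` of `ℤ/n` diagonalise every circulant:
`C = F D F*` with `F` the DFT matrix, its columns in any order, and `D` diagonal. For `n = m²`,
write `t = t₀ + m t₁` and put column `t₁ + m t₀` in position `t` (swap the base-`m` digits).
Since `ω ^ (m²) = 1`, the entry `ω ^ (i (t₁ + m t₀))` is then `ω ^ (i t₁) · ω ^ (m (i mod m) t₀)`: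
a function of `(i, t / m)` times a function of `(i mod m, t)`, which is exactly the shape of a
Monarch matrix. Then `F D` is Monarch as well, and `C = (F D) F*`.
-/

theorem MonarchClass.of_apply_eq_mul {k b : ℕ} {M : Matrix (Fin (k * b)) (Fin (k * b)) ℂ}
    (f : Fin (k * b) → Fin k → ℂ) (g : Fin b → Fin (k * b) → ℂ)
    (hM : ∀ i j, M i j = f i j.divNat * g i.modNat j) : MonarchClass b (k * b) M := by
  refine ⟨of fun i t => if t.modNat = i.modNat then f i t.divNat else 0,
    of fun t j => if t.divNat = j.divNat then g t.modNat j else 0, ?_, ?_, ?_⟩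
  · intro i t h
    simp [Fin.ext_iff, Ne.symm h]
  · intro t j h
    simp [Fin.ext_iff, h]
  · ext i j
    rw [hM, mul_apply, ← finProdFinEquiv.sum_comp, Fintype.sum_prod_type]
    have hdiv (p : Fin k × Fin b) : (finProdFinEquiv p).divNat = p.1 :=
      congrArg Prod.fst (finProdFinEquiv.symm_apply_apply p)
    have hmod (p : Fin k × Fin b) : (finProdFinEquiv p).modNat = p.2 :=
      congrArg Prod.snd (finProdFinEquiv.symm_apply_apply p)
    simp [hdiv, hmod]

theorem MonarchClass.mul_diagonal {b n : ℕ} {M : Matrix (Fin n) (Fin n) ℂ}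
    (hM : MonarchClass b n M) (d : Fin n → ℂ) : MonarchClass b n (M * diagonal d) := by
  obtain ⟨L, R, hL, hR, rfl⟩ := hM
  refine ⟨L, R * diagonal d, hL, fun t j h => ?_, Matrix.mul_assoc _ _ _⟩
  rw [Matrix.mul_diagonal, hR t j h, zero_mul]

namespace AddChar

variable {C : Type*} [CommMonoid C] {n : ℕ} [NeZero n]

def finChar {ζ : C} (hζ : ζ ^ n = 1) : AddChar (Fin n) C where
  toFun a := ζ ^ (a : ℕ)
  map_zero_eq_one' := by simp
  map_add_eq_mul' a b := by rw [Fin.val_add, ← pow_eq_pow_mod _ hζ, pow_add]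

def dftChar {ω : C} (hω : ω ^ n = 1) (t : Fin n) : AddChar (Fin n) C :=
  finChar (ζ := ω ^ (t : ℕ)) (by rw [← pow_mul, mul_comm, pow_mul, hω, one_pow])

theorem dftChar_apply {ω : C} (hω : ω ^ n = 1) (t a : Fin n) :
    dftChar hω t a = ω ^ ((t : ℕ) * a) := (pow_mul _ _ _).symm

end AddChar

theorem IsPrimitiveRoot.sum_dftChar_apply {n : ℕ} [NeZero n] {ω : ℂ} (hω : IsPrimitiveRoot ω n)
    (a : Fin n) : ∑ t, AddChar.dftChar hω.pow_eq_one t a = if a = 0 then (n : ℂ) else 0 := by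
  have hpow (t : Fin n) : AddChar.dftChar hω.pow_eq_one t a = (ω ^ (a : ℕ)) ^ (t : ℕ) := by
    rw [AddChar.dftChar_apply, mul_comm, pow_mul]
  simp_rw [hpow]
  rw [Fin.sum_univ_eq_sum_range (fun t => (ω ^ (a : ℕ)) ^ t)]
  split_ifs with ha
  · simp [ha]
  · have hne : ω ^ (a : ℕ) ≠ 1 :=
      hω.pow_ne_one_of_pos_of_lt (Fin.val_ne_zero_iff.mpr ha) a.isLt
    rw [geom_sum_eq hne, ← pow_mul, mul_comm, pow_mul, hω.pow_eq_one, one_pow, sub_self,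
      zero_div]

def charMatrix {G ι : Type*} [AddMonoid G] (ψ : ι → AddChar G ℂ) : Matrix G ι ℂ :=
  Matrix.of fun a t => ψ t a

theorem circulant_eq_charMatrix_mul_diagonal_mul_conjTranspose {G ι : Type*} [AddCommGroup G]
    [Fintype G] [DecidableEq G] [Fintype ι] [DecidableEq ι] (ψ : ι → AddChar G ℂ)
    (hψ : ∀ a, ∑ t, ψ t a = if a = 0 then (Fintype.card G : ℂ) else 0) (c : G → ℂ) :
    circulant c = charMatrix ψ *
      diagonal (fun t => (Fintype.card G : ℂ)⁻¹ * ∑ s, c s * star (ψ t s)) *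
      (charMatrix ψ)ᴴ := by
  have hN : (Fintype.card G : ℂ) ≠ 0 := Nat.cast_ne_zero.mpr Fintype.card_ne_zero
  ext i j
  rw [Matrix.mul_apply]
  simp only [circulant_apply, mul_diagonal, conjTranspose_apply, charMatrix, of_apply]
  calc c (i - j)
      = ∑ s, (Fintype.card G : ℂ)⁻¹ * c s * ∑ t, ψ t (i - s - j) := by
        simp only [hψ, sub_right_comm i _ j, sub_eq_zero, mul_ite, mul_zero, Finset.sum_ite_eq,
          Finset.mem_univ, if_true]
        field_simp
    _ = _ := by
        simp only [Finset.mul_sum, Finset.sum_mul]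
        rw [Finset.sum_comm]
        refine Fintype.sum_congr _ _ fun t => Fintype.sum_congr _ _ fun s => ?_
        rw [sub_eq_add_neg, sub_eq_add_neg, AddChar.map_add_eq_mul, AddChar.map_add_eq_mul,
          AddChar.map_neg_eq_conj, AddChar.map_neg_eq_conj]
        simp only [Complex.star_def]
        ring

def digitSwap (m : ℕ) : Equiv.Perm (Fin (m * m)) :=
  finProdFinEquiv.permCongr (Equiv.prodComm (Fin m) (Fin m))

theorem digitSwap_val {m : ℕ} (t : Fin (m * m)) :
    (digitSwap m t : ℕ) = t / m + m * (t % m) := rfl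

theorem monarchClass_charMatrix_dftChar_digitSwap {m : ℕ} [NeZero (m * m)] {ω : ℂ}
    (hω : ω ^ (m * m) = 1) :
    MonarchClass m (m * m) (charMatrix fun t => AddChar.dftChar hω (digitSwap m t)) := by
  refine MonarchClass.of_apply_eq_mul (fun i p => ω ^ ((p : ℕ) * i))
    (fun q t => ω ^ (m * (t % m) * q)) fun i t => ?_
  have hexp : (digitSwap m t : ℕ) * i =
      t / m * i + m * (t % m) * (i % m) + m * m * (t % m * (i / m)) := by
    rw [digitSwap_val]
    linear_combination m * (t % m : ℕ) * (Nat.mod_add_div (i : ℕ) m).symm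
  rw [charMatrix, Matrix.of_apply, AddChar.dftChar_apply, hexp, pow_add, pow_mul ω (m * m), hω,
    one_pow, mul_one, pow_add]
  rfl

theorem circulant_in_mmstar_general (m : ℕ)
    (c : Fin (m * m) → ℂ)
    (C : Matrix (Fin (m * m)) (Fin (m * m)) ℂ)
    (hC : ∀ i j : Fin (m * m), C i j = c (i - j)) :
    ∃ M₁ M₂ : Matrix (Fin (m * m)) (Fin (m * m)) ℂ,
      MonarchClass m (m * m) M₁ ∧ MonarchClass m (m * m) M₂ ∧ C = M₁ * M₂ᴴ := by
  rcases Nat.eq_zero_or_pos m with rfl | hm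
  · have : IsEmpty (Fin (0 * 0)) := Fin.isEmpty'
    have h₀ : MonarchClass 0 (0 * 0) 0 := ⟨0, 0, isEmptyElim, isEmptyElim, Subsingleton.elim _ _⟩
    exact ⟨0, 0, h₀, h₀, Subsingleton.elim _ _⟩
  have : NeZero (m * m) := ⟨by positivity⟩
  have hω := Complex.isPrimitiveRoot_exp (m * m) (NeZero.ne _)
  have hF := monarchClass_charMatrix_dftChar_digitSwap hω.pow_eq_one
  have horth (a : Fin (m * m)) :
      ∑ t, AddChar.dftChar hω.pow_eq_one (digitSwap m t) a =
        if a = 0 then (Fintype.card (Fin (m * m)) : ℂ) else 0 := by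
    rw [Equiv.sum_comp (digitSwap m) (fun t => AddChar.dftChar hω.pow_eq_one t a), Fintype.card_fin]
    exact hω.sum_dftChar_apply a
  exact ⟨_, _, hF.mul_diagonal _, hF,
    (Matrix.ext hC).trans (circulant_eq_charMatrix_mul_diagonal_mul_conjTranspose _ horth c)⟩

/-- for `n = 4^k ≥ 4` (so `n = m²` with `m = 2^k`), every `n × n`
circulant matrix `C[i,j] = c[(i − j) mod n]` lies in `MM*(m, n)`: there are
Monarch matrices `M₁, M₂ ∈ M(m,n)` with `C = M₁ · M₂*`. -/
theorem circulant_in_mmstar (k : ℕ) (hk : 1 ≤ k) (m : ℕ) (hm : m = 2 ^ k)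
    (c : Fin (m * m) → ℂ)
    (C : Matrix (Fin (m * m)) (Fin (m * m)) ℂ)
    (hC : ∀ i j : Fin (m * m), C i j = c (i - j)) :
    ∃ M₁ M₂ : Matrix (Fin (m * m)) (Fin (m * m)) ℂ,
      MonarchClass m (m * m) M₁ ∧ MonarchClass m (m * m) M₂ ∧ C = M₁ * M₂ᴴ :=
  circulant_in_mmstar_general m c C hC
end

section
/- Let n ≥ 4 be a power of 2 and let b ∈ (1, n) be an integer dividing n. Then { B₁ · B₂* : B₁, B₂ ∈ B^{(n)} } ⊆ MM*(b, n): every product of a butterfly matrix with the conjugate transpose of a butterfly matrix lies in the class MM*(b,n). -/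
open Matrix

/-- Butterfly class `B^{(n)}` for `n = 2^k`: products `B_n · B_{n/2} · ⋯ · B_2` where
`B_{2^i} ∈ BD(2^i, n) ∩ DB(2^{i-1}, n)`. -/
def Butterfly (n k : ℕ) (M : Matrix (Fin n) (Fin n) ℂ) : Prop :=
  ∃ B : ℕ → Matrix (Fin n) (Fin n) ℂ,
    (∀ i, 1 ≤ i → i ≤ k → BD (2 ^ i) n (B i) ∧ DB (2 ^ (i - 1)) n (B i)) ∧
    M = (((List.range k).map fun t => B (k - t)).prod)

/-!
Split the butterfly product `B_n ⋯ B_2` in front of the factor of size `2b`: the factors of size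
`2^i > b` lie in `DB(2^(i-1), n) ⊆ DB(b, n)`, those of size `2^i ≤ b` lie in `BD(2^i, n) ⊆ BD(b, n)`,
and both classes are closed under products. Hence every butterfly matrix already lies in
`M(b, n)`, and `B₁ B₂* = M₁ M₂*` with `Mᵢ = Bᵢ`.
-/

section FiberSubmonoid

variable {ι α R : Type*} [Fintype ι] [DecidableEq ι] [Semiring R]

def fiberSubmonoid (f : ι → α) : Submonoid (Matrix ι ι R) where
  carrier := {A | ∀ i j, f i ≠ f j → A i j = 0}
  one_mem' i j h := one_apply_ne fun e => h (congrArg f e)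
  mul_mem' {A B} hA hB i j h := by
    refine (mul_apply ..).trans <| Finset.sum_eq_zero fun m _ => ?_
    by_cases hm : f i = f m
    · rw [hB m j fun e => h (hm.trans e), mul_zero]
    · rw [hA i m hm, zero_mul]

theorem fiberSubmonoid_mono {f g : ι → α} (h : ∀ i j, f i = f j → g i = g j) :
    fiberSubmonoid (R := R) f ≤ fiberSubmonoid g :=
  fun _ hA i j hg => hA i j fun hf => hg (h i j hf)

end FiberSubmonoid

section MonarchFactors

variable {b c n : ℕ} {A : Matrix (Fin n) (Fin n) ℂ}

theorem DB_iff_mem_fiberSubmonoid : DB b n A ↔ A ∈ fiberSubmonoid fun i : Fin n => i.val % b :=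
  Iff.rfl

theorem BD_iff_mem_fiberSubmonoid : BD b n A ↔ A ∈ fiberSubmonoid fun i : Fin n => i.val / b :=
  Iff.rfl

theorem DB.of_dvd (hbc : b ∣ c) (h : DB c n A) : DB b n A :=
  fiberSubmonoid_mono (fun i j e => by
    rw [← Nat.mod_mod_of_dvd i.val hbc, ← Nat.mod_mod_of_dvd j.val hbc, e]) h

theorem BD.of_dvd (hcb : c ∣ b) (h : BD c n A) : BD b n A :=
  fiberSubmonoid_mono (fun i j e => by
    rw [← Nat.mul_div_cancel' hcb, ← Nat.div_div_eq_div_mul, ← Nat.div_div_eq_div_mul, e]) h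

theorem monarchClass_list_prod {l : List (Matrix (Fin n) (Fin n) ℂ)} (i : ℕ)
    (hL : ∀ A ∈ l.take i, DB b n A) (hR : ∀ A ∈ l.drop i, BD b n A) :
    MonarchClass b n l.prod :=
  ⟨_, _, DB_iff_mem_fiberSubmonoid.mpr (list_prod_mem hL),
    BD_iff_mem_fiberSubmonoid.mpr (list_prod_mem hR), (List.prod_take_mul_prod_drop l i).symm⟩

end MonarchFactors

theorem Butterfly.monarchClass {n k m : ℕ} (hmk : m ≤ k) {M : Matrix (Fin n) (Fin n) ℂ}
    (hM : Butterfly n k M) : MonarchClass (2 ^ m) n M := by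
  obtain ⟨B, hB, rfl⟩ := hM
  refine monarchClass_list_prod (k - m) (fun A hA => ?_) (fun A hA => ?_)
  · obtain ⟨t, ht, rfl⟩ := List.mem_take_iff_getElem.mp hA
    simp only [List.length_map, List.length_range, List.getElem_map, List.getElem_range] at ht ⊢
    exact (hB (k - t) (by omega) (by omega)).2.of_dvd (pow_dvd_pow 2 (by omega))
  · obtain ⟨t, ht, rfl⟩ := List.mem_drop_iff_getElem.mp hA
    simp only [List.length_map, List.length_range, List.getElem_map, List.getElem_range] at ht ⊢
    exact (hB (k - (k - m + t)) (by omega) (by omega)).1.of_dvd (pow_dvd_pow 2 (by omega))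

theorem bbstar_subset_mmstar_general (k n : ℕ) (hn : n = 2 ^ k)
    (b : ℕ) (hdvd : b ∣ n)
    (B₁ B₂ : Matrix (Fin n) (Fin n) ℂ)
    (hB₁ : Butterfly n k B₁) (hB₂ : Butterfly n k B₂) :
    ∃ M₁ M₂ : Matrix (Fin n) (Fin n) ℂ,
      MonarchClass b n M₁ ∧ MonarchClass b n M₂ ∧ B₁ * B₂ᴴ = M₁ * M₂ᴴ := by
  obtain ⟨m, hmk, rfl⟩ := (Nat.dvd_prime_pow Nat.prime_two).mp (hn ▸ hdvd)
  exact ⟨B₁, B₂, hB₁.monarchClass hmk, hB₂.monarchClass hmk, rfl⟩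

/-- for `n = 2^k ≥ 4` and `b ∈ (1,n)` dividing `n`, every product
`B₁ · B₂*` of a butterfly matrix with the conjugate transpose of a butterfly matrix
lies in `MM*(b,n)`. -/
theorem bbstar_subset_mmstar (k n : ℕ) (hk : 2 ≤ k) (hn : n = 2 ^ k)
    (b : ℕ) (hb : 1 < b) (hbn : b < n) (hdvd : b ∣ n)
    (B₁ B₂ : Matrix (Fin n) (Fin n) ℂ)
    (hB₁ : Butterfly n k B₁) (hB₂ : Butterfly n k B₂) :
    ∃ M₁ M₂ : Matrix (Fin n) (Fin n) ℂ,
      MonarchClass b n M₁ ∧ MonarchClass b n M₂ ∧ B₁ * B₂ᴴ = M₁ * M₂ᴴ :=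
  bbstar_subset_mmstar_general k n hn b hdvd B₁ B₂ hB₁ hB₂
end
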